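/- Let μ be a probability measure on ℝ^n, U ⊆ ℝ^m open, θ₀ ∈ U, and g : ℝ^m × ℝ^n → ℝ^d such that for μ-almost every z the map θ ↦ g(θ, z) is differentiable on U. Let q : ℝ^m → ℝ^d → ℝ be a jointly C¹ family of strictly positive probability densities such that for every θ ∈ U, q(θ, ·) is a density of the pushforward of μ under g(θ, ·) (i.e. ∫ h(g(θ, z)) dμ(z) = ∫ h(x) q(θ, x) dx for every bounded measurable h), and let p : ℝ^d → ℝ be a strictly positive C¹ probability density. Assume KL(q(θ,·)‖p) = ∫ q(θ, x) log(q(θ, x)/p(x)) dx is finite for θ in a neighborhood of θ₀ and that the θ-derivatives of the integrands z ↦ log q(θ, g(θ, z)) − log p(g(θ, z)) are dominated, uniformly in θ near θ₀, by a μ-integrable function. Then θ ↦ KL(q(θ,·)‖p) is differentiable at θ₀ with gradient ∇_θ KL(q(θ,·)‖p)|_{θ₀} = ∫ [ ∇_θ log q(θ, x)|_{θ=θ₀, x=g(θ₀,z)} + (∇_x log q(θ₀, ·) − ∇_x log p)(g(θ₀, z))^⊤ ∘ ∇_θ g(θ₀, z) ] dμ(z). -/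

import Mathlib

/-!
Under the pushforward property, KL(q θ ‖ p) is the `μ`-expectation of the pathwise log-ratio
`F θ z = log q θ (g θ z) - log p (g θ z)`, so the gradient formula is differentiation under the
integral sign, with the chain rule splitting `∂_θ F` into the parameter score and the difference
of spatial scores composed with `∂_θ g`.

The domination hypothesis bounds `‖∂_θ F θ z‖` for almost every `z` separately for each `θ`.
Along a segment, Fubini on `μ × dt` exchanges the two quantifiers, and the fundamental theorem of
calculus then gives `|F b z - F a z| ≤ B z ‖b - a‖` for almost every `z`, simultaneously for all
`a, b` in a countable dense subset of a ball; continuity in `θ` extends this Lipschitz bound to the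
whole ball, which is what dominated differentiation needs.
-/

open MeasureTheory Real Filter Topology Set

section Pushforward

variable {Ω X : Type*} [MeasurableSpace Ω] [MeasurableSpace X] {μ : Measure Ω} {ν : Measure X}
  {G : Ω → X} {ρ : X → ℝ}

theorem map_eq_withDensity_of_forall_integral_comp_eq [IsFiniteMeasure μ] (hG : Measurable G)
    (hρ_nonneg : ∀ x, 0 ≤ ρ x) (hρ_int : Integrable ρ ν)
    (hpush : ∀ h : X → ℝ, Measurable h → (∃ C, ∀ x, |h x| ≤ C) →
      ∫ z, h (G z) ∂μ = ∫ x, h x * ρ x ∂ν) :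
    μ.map G = ν.withDensity (fun x => ENNReal.ofReal (ρ x)) := by
  ext s hs
  have hind : ∃ C, ∀ x, |s.indicator (1 : X → ℝ) x| ≤ C :=
    ⟨1, fun x => by by_cases hx : x ∈ s <;> simp [hx]⟩
  have hreal : μ.real (G ⁻¹' s) = ∫ x in s, ρ x ∂ν := by
    have h := hpush _ (measurable_one.indicator hs) hind
    simp only [← Set.indicator_comp_right, Pi.one_comp, ← Set.indicator_mul_left] at h
    simpa only [integral_indicator_one (hG hs), integral_indicator hs, Pi.one_apply, one_mul]
      using h
  rw [Measure.map_apply hG hs, withDensity_apply _ hs, ← ofReal_measureReal, hreal,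
    ofReal_integral_eq_lintegral_ofReal hρ_int.integrableOn (ae_of_all _ hρ_nonneg)]

theorem integrable_comp_and_integral_comp_of_map_eq_withDensity (hG : Measurable G)
    (hρ_meas : Measurable ρ) (hρ_nonneg : ∀ x, 0 ≤ ρ x)
    (hmap : μ.map G = ν.withDensity (fun x => ENNReal.ofReal (ρ x)))
    {ψ : X → ℝ} (hψ : Measurable ψ) (hint : Integrable (fun x => ρ x * ψ x) ν) :
    Integrable (fun z => ψ (G z)) μ ∧ ∫ z, ψ (G z) ∂μ = ∫ x, ρ x * ψ x ∂ν := by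
  have hsmul : ∀ x, (ρ x).toNNReal • ψ x = ρ x * ψ x := fun x => by
    rw [NNReal.smul_def, smul_eq_mul, Real.coe_toNNReal _ (hρ_nonneg x)]
  have hρ' : Measurable fun x => (ρ x).toNNReal := hρ_meas.real_toNNReal
  constructor
  · rw [← Function.comp_def, ← integrable_map_measure hψ.aestronglyMeasurable hG.aemeasurable,
      hmap]
    exact (integrable_withDensity_iff_integrable_smul hρ').2 (by simpa only [hsmul] using hint)
  · rw [← integral_map hG.aemeasurable hψ.aestronglyMeasurable, hmap]
    exact (integral_withDensity_eq_integral_smul hρ' ψ).trans (by simp only [hsmul])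

theorem integrable_log_ratio_comp_and_integral_eq [IsFiniteMeasure μ] {q p : X → ℝ}
    (hG : Measurable G) (hq_meas : Measurable q) (hp_meas : Measurable p) (hq_pos : ∀ x, 0 < q x)
    (hp_ne : ∀ x, p x ≠ 0) (hq_int : Integrable q ν)
    (hpush : ∀ h : X → ℝ, Measurable h → (∃ C, ∀ x, |h x| ≤ C) →
      ∫ z, h (G z) ∂μ = ∫ x, h x * q x ∂ν)
    (hKL : Integrable (fun x => q x * Real.log (q x / p x)) ν) :
    Integrable (fun z => Real.log (q (G z)) - Real.log (p (G z))) μ ∧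
      ∫ z, Real.log (q (G z)) - Real.log (p (G z)) ∂μ = ∫ x, q x * Real.log (q x / p x) ∂ν := by
  have hlog : ∀ x, q x * Real.log (q x / p x) = q x * (Real.log (q x) - Real.log (p x)) :=
    fun x => by rw [Real.log_div (hq_pos x).ne' (hp_ne x)]
  simp only [hlog] at hKL ⊢
  exact integrable_comp_and_integral_comp_of_map_eq_withDensity hG hq_meas
    (fun x => (hq_pos x).le)
    (map_eq_withDensity_of_forall_integral_comp_eq hG (fun x => (hq_pos x).le) hq_int hpush)
    (hq_meas.log.sub hp_meas.log) hKL

end Pushforward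

section MeanValue

variable {Ω G : Type*} [MeasurableSpace Ω] {μ : Measure Ω} [SFinite μ]
  [NormedAddCommGroup G] [NormedSpace ℝ G] [CompleteSpace G]

theorem ae_norm_sub_le_of_forall_ae_norm_deriv_le' {f f' : ℝ → Ω → G} {C : Ω → ℝ}
    (hf_meas : ∀ t ∈ Icc (0 : ℝ) 1, StronglyMeasurable (f t))
    (hf_cont : ∀ z, ContinuousOn (f · z) (Icc 0 1))
    (hf' : ∀ z, ∀ t ∈ Ioo (0 : ℝ) 1, HasDerivAt (f · z) (f' t z) t)
    (hC : Measurable C) (hbound : ∀ t ∈ Ioo (0 : ℝ) 1, ∀ᵐ z ∂μ, ‖f' t z‖ ≤ C z) :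
    ∀ᵐ z ∂μ, ‖f 1 z - f 0 z‖ ≤ C z := by
  set clamp : ℝ → ℝ := fun t => (projIcc 0 1 zero_le_one t : ℝ)
  have hclamp_eq : ∀ t ∈ Icc (0 : ℝ) 1, clamp t = t := fun t ht => by
    simp [clamp, projIcc_of_mem _ ht]
  have hjoint : StronglyMeasurable (Function.uncurry fun t z => f (clamp t) z) :=
    stronglyMeasurable_uncurry_of_continuous_of_stronglyMeasurable
      (fun z => (hf_cont z).comp_continuous (continuous_subtype_val.comp continuous_projIcc)
        fun t => Subtype.mem _)
      fun t => hf_meas _ (Subtype.mem _)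
  -- a jointly measurable version of `f'`, as a limit of difference quotients
  set D : ℝ × Ω → G := fun p =>
    limUnder atTop fun k : ℕ => (k : ℝ) • (f (clamp (p.1 + (k : ℝ)⁻¹)) p.2 - f (clamp p.1) p.2)
  have hD_meas : StronglyMeasurable D := by
    refine StronglyMeasurable.limUnder fun k => ?_
    have hshift : Measurable fun p : ℝ × Ω => (p.1 + (k : ℝ)⁻¹, p.2) :=
      (measurable_fst.add_const _).prodMk measurable_snd
    exact ((hjoint.comp_measurable hshift).sub hjoint).const_smul (k : ℝ)
  have hD_eq : ∀ z, ∀ t ∈ Ioo (0 : ℝ) 1, D (t, z) = f' t z := by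
    intro z t ht
    have hloc : (fun s => f (clamp s) z) =ᶠ[𝓝 t] (f · z) :=
      eventually_of_mem (Ioo_mem_nhds ht.1 ht.2) fun s hs => by
        simp only [hclamp_eq s (Ioo_subset_Icc_self hs)]
    have := ((hf' z t ht).congr_of_eventuallyEq hloc).hasFDerivAt.lim 1
      (tendsto_norm_atTop_atTop.comp tendsto_natCast_atTop_atTop)
    simpa only [smul_eq_mul, mul_one, ContinuousLinearMap.toSpanSingleton_apply, one_smul]
      using this.limUnder_eq
  have hswap : ∀ᵐ z ∂μ, ∀ᵐ t ∂(volume.restrict (Ioc (0 : ℝ) 1)), ‖D (t, z)‖ ≤ C z := by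
    rw [← Measure.restrict_congr_set Ioo_ae_eq_Ioc]
    refine (Measure.ae_ae_comm ?_).2 ?_
    · exact measurableSet_le (hD_meas.norm.measurable.comp measurable_swap)
        (hC.comp measurable_fst)
    · refine (ae_restrict_iff' measurableSet_Ioo).2 (Eventually.of_forall fun t ht => ?_)
      filter_upwards [hbound t ht] with z hz
      rwa [hD_eq z t ht]
  filter_upwards [hswap] with z hz
  have hD_int : IntervalIntegrable (fun t => D (t, z)) volume 0 1 := by
    rw [intervalIntegrable_iff_integrableOn_Ioc_of_le zero_le_one]
    exact Measure.integrableOn_of_bounded measure_Ioc_lt_top.ne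
      (hD_meas.comp_measurable measurable_prodMk_right).aestronglyMeasurable hz
  have hftc : ∫ t in 0..1, D (t, z) = f 1 z - f 0 z :=
    intervalIntegral.integral_eq_sub_of_hasDerivAt_of_le zero_le_one (hf_cont z)
      (fun t ht => (hD_eq z t ht) ▸ hf' z t ht) hD_int
  rw [← hftc]
  have := intervalIntegral.norm_integral_le_of_norm_le_const_ae (C := C z)
    (by rw [uIoc_of_le zero_le_one]; exact (ae_restrict_iff' measurableSet_Ioc).1 hz)
  rwa [sub_zero, abs_one, mul_one] at this

theorem ae_norm_sub_le_of_forall_ae_norm_deriv_le {f f' : ℝ → Ω → G} {C : Ω → ℝ}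
    (hf_meas : ∀ t ∈ Icc (0 : ℝ) 1, StronglyMeasurable (f t))
    (hf_reg : ∀ᵐ z ∂μ, ContinuousOn (f · z) (Icc 0 1) ∧
      ∀ t ∈ Ioo (0 : ℝ) 1, HasDerivAt (f · z) (f' t z) t)
    (hC : AEMeasurable C μ) (hbound : ∀ t ∈ Ioo (0 : ℝ) 1, ∀ᵐ z ∂μ, ‖f' t z‖ ≤ C z) :
    ∀ᵐ z ∂μ, ‖f 1 z - f 0 z‖ ≤ C z := by
  obtain ⟨S, hS_ae, hS_meas, hS_reg⟩ := hf_reg.exists_measurable_mem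
  have hS_fun : ∀ z ∈ S, ∀ (u : ℝ → Ω → G), (fun t => S.indicator (u t) z) = (u · z) :=
    fun z hz u => funext fun t => indicator_of_mem hz _
  have hSc_fun : ∀ z ∉ S, ∀ (u : ℝ → Ω → G), (fun t => S.indicator (u t) z) = fun _ => 0 :=
    fun z hz u => funext fun t => indicator_of_notMem hz _
  have key := ae_norm_sub_le_of_forall_ae_norm_deriv_le' (μ := μ)
    (f := fun t => S.indicator (f t)) (f' := fun t => S.indicator (f' t)) (C := hC.mk C)
    (fun t ht => (hf_meas t ht).indicator hS_meas)
    (fun z => by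
      by_cases hz : z ∈ S
      · rw [hS_fun z hz]; exact (hS_reg z hz).1
      · rw [hSc_fun z hz]; exact continuousOn_const)
    (fun z t ht => by
      by_cases hz : z ∈ S
      · rw [hS_fun z hz, indicator_of_mem hz]; exact (hS_reg z hz).2 t ht
      · rw [hSc_fun z hz, indicator_of_notMem hz]; exact hasDerivAt_const t 0)
    hC.measurable_mk
    (fun t ht => by
      filter_upwards [hbound t ht, hS_ae, hC.ae_eq_mk] with z hz hzS hCz
      rwa [indicator_of_mem hzS, ← hCz])
  filter_upwards [key, hS_ae, hC.ae_eq_mk] with z hz hzS hCz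
  rwa [indicator_of_mem hzS, indicator_of_mem hzS, ← hCz] at hz

theorem ae_norm_sub_le_of_forall_ae_norm_fderiv_le {E : Type*} [NormedAddCommGroup E]
    [NormedSpace ℝ E] {F : E → Ω → G} {B : Ω → ℝ} {s : Set E} (hs : Convex ℝ s)
    (hF_meas : ∀ θ ∈ s, StronglyMeasurable (F θ))
    (hF_diff : ∀ᵐ z ∂μ, ∀ θ ∈ s, DifferentiableAt ℝ (F · z) θ) (hB : AEMeasurable B μ)
    (hbound : ∀ θ ∈ s, ∀ᵐ z ∂μ, ‖fderiv ℝ (F · z) θ‖ ≤ B z) {a b : E} (ha : a ∈ s) (hb : b ∈ s) :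
    ∀ᵐ z ∂μ, ‖F b z - F a z‖ ≤ B z * ‖b - a‖ := by
  have hmem : ∀ t ∈ Icc (0 : ℝ) 1, AffineMap.lineMap a b t ∈ s := fun t ht =>
    hs.lineMap_mem ha hb ht
  have hderiv : ∀ z, (∀ θ ∈ s, DifferentiableAt ℝ (F · z) θ) → ∀ t ∈ Icc (0 : ℝ) 1,
      HasDerivAt (fun t => F (AffineMap.lineMap a b t) z)
        (fderiv ℝ (F · z) (AffineMap.lineMap a b t) (b - a)) t := fun z hz t ht =>
    (hz _ (hmem t ht)).hasFDerivAt.comp_hasDerivAt t AffineMap.hasDerivAt_lineMap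
  simpa only [AffineMap.lineMap_apply_zero, AffineMap.lineMap_apply_one] using
    ae_norm_sub_le_of_forall_ae_norm_deriv_le (f := fun t z => F (AffineMap.lineMap a b t) z)
      (fun t ht => hF_meas _ (hmem t ht))
      (hF_diff.mono fun z hz => ⟨fun t ht => (hderiv z hz t ht).continuousAt.continuousWithinAt,
        fun t ht => hderiv z hz t (Ioo_subset_Icc_self ht)⟩)
      (hB.mul_const _)
      (fun t ht => (hbound _ (hmem t (Ioo_subset_Icc_self ht))).mono fun z hz =>
        ((fderiv ℝ (F · z) _).le_opNorm _).trans (mul_le_mul_of_nonneg_right hz (norm_nonneg _)))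

theorem ae_lipschitzOnWith_of_forall_ae_norm_fderiv_le {E : Type*} [NormedAddCommGroup E]
    [NormedSpace ℝ E] [TopologicalSpace.SeparableSpace E] {F : E → Ω → G} {B : Ω → ℝ}
    {s : Set E} (hs : Convex ℝ s) (hF_meas : ∀ θ ∈ s, StronglyMeasurable (F θ))
    (hF_diff : ∀ᵐ z ∂μ, ∀ θ ∈ s, DifferentiableAt ℝ (F · z) θ) (hB : AEMeasurable B μ)
    (hbound : ∀ θ ∈ s, ∀ᵐ z ∂μ, ‖fderiv ℝ (F · z) θ‖ ≤ B z) :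
    ∀ᵐ z ∂μ, LipschitzOnWith (Real.nnabs (B z)) (F · z) s := by
  obtain ⟨D, hDs, hD_count, hsD⟩ :=
    (TopologicalSpace.IsSeparable.of_separableSpace s).exists_countable_dense_subset
  have hpairs : ∀ᵐ z ∂μ, ∀ a ∈ D, ∀ b ∈ D, ‖F b z - F a z‖ ≤ B z * ‖b - a‖ := by
    refine (ae_ball_iff hD_count).2 fun a ha => (ae_ball_iff hD_count).2 fun b hb => ?_
    exact ae_norm_sub_le_of_forall_ae_norm_fderiv_le hs hF_meas hF_diff hB hbound (hDs ha) (hDs hb)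
  filter_upwards [hpairs, hF_diff] with z hz hdiff
  refine LipschitzOnWith.of_dist_le_mul fun x hx y hy => ?_
  have hxy : (y, x) ∈ closure (D ×ˢ D) := by
    rw [closure_prod_eq]; exact ⟨hsD hy, hsD hx⟩
  have key : ‖F x z - F y z‖ ≤ B z * ‖x - y‖ := by
    refine ContinuousWithinAt.closure_le hxy ?_ ?_ fun p hp => hz _ hp.1 _ hp.2
    · exact ((ContinuousAt.comp (x := (y, x)) (hdiff x hx).continuousAt continuousAt_snd).sub
        (ContinuousAt.comp (x := (y, x)) (hdiff y hy).continuousAt continuousAt_fst)).norm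
        |>.continuousWithinAt
    · exact (continuous_const.mul (continuous_snd.sub continuous_fst).norm).continuousWithinAt
  rw [dist_eq_norm, dist_eq_norm, Real.coe_nnabs]
  exact key.trans (mul_le_mul_of_nonneg_right (le_abs_self _) (norm_nonneg _))

end MeanValue

section DerivMeasurable

variable {Ω E G : Type*} [MeasurableSpace Ω] {μ : Measure Ω}
  [NormedAddCommGroup E] [NormedSpace ℝ E] [FiniteDimensional ℝ E]
  [NormedAddCommGroup G] [NormedSpace ℝ G]

theorem ContinuousLinearMap.aestronglyMeasurable_of_forall_apply {A : Ω → E →L[ℝ] G}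
    (hA : ∀ v, AEStronglyMeasurable (fun z => A z v) μ) : AEStronglyMeasurable A μ := by
  let b := Module.finBasis ℝ E
  have hsum : A = fun z =>
      ∑ i, (LinearMap.toContinuousLinearMap (b.coord i)).smulRight (A z (b i)) := by
    ext z v
    simp only [sum_apply,
      ContinuousLinearMap.smulRight_apply, LinearMap.coe_toContinuousLinearMap',
      Module.Basis.coord_apply, ← map_smul, ← map_sum, b.sum_repr]
  rw [hsum]
  exact Finset.aestronglyMeasurable_fun_sum _ fun i _ =>
    (ContinuousLinearMap.smulRightL ℝ E G _).continuous.comp_aestronglyMeasurable (hA (b i))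

theorem aestronglyMeasurable_of_hasFDerivAt_param {F : E → Ω → G} {A : Ω → E →L[ℝ] G} {θ₀ : E}
    (hF : ∀ᶠ θ in 𝓝 θ₀, AEStronglyMeasurable (F θ) μ)
    (hA : ∀ᵐ z ∂μ, HasFDerivAt (F · z) (A z) θ₀) : AEStronglyMeasurable A μ := by
  refine ContinuousLinearMap.aestronglyMeasurable_of_forall_apply fun v => ?_
  have hlim : Tendsto (fun k : ℕ => θ₀ + (k : ℝ)⁻¹ • v) atTop (𝓝 θ₀) := by
    simpa using tendsto_const_nhds.add
      (((tendsto_inv_atTop_zero (𝕜 := ℝ)).comp tendsto_natCast_atTop_atTop).smul_const v)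
  obtain ⟨K, hK⟩ := eventually_atTop.1 (hlim.eventually hF)
  -- shift the index so that every difference quotient is measurable
  refine aestronglyMeasurable_of_tendsto_ae atTop
    (f := fun k z => ((k + K : ℕ) : ℝ) • (F (θ₀ + ((k + K : ℕ) : ℝ)⁻¹ • v) z - F θ₀ z))
    (fun k => ((hK _ le_add_self).sub hF.self_of_nhds).const_smul _) ?_
  filter_upwards [hA] with z hz
  exact (tendsto_add_atTop_iff_nat K).2
    (hz.lim v (tendsto_norm_atTop_atTop.comp tendsto_natCast_atTop_atTop))

end DerivMeasurable

section PartialDerivatives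

variable {𝕜 E F G : Type*} [NontriviallyNormedField 𝕜] [NormedAddCommGroup E] [NormedSpace 𝕜 E]
  [NormedAddCommGroup F] [NormedSpace 𝕜 F] [NormedAddCommGroup G] [NormedSpace 𝕜 G]

theorem DifferentiableAt.hasFDerivAt_comp_prodMk {f : E × F → G} {γ : E → F} {γ' : E →L[𝕜] F}
    {a : E} (hf : DifferentiableAt 𝕜 f (a, γ a)) (hγ : HasFDerivAt γ γ' a) :
    HasFDerivAt (fun θ => f (θ, γ θ))
      (fderiv 𝕜 (fun θ => f (θ, γ a)) a + (fderiv 𝕜 (fun x => f (a, x)) (γ a)).comp γ') a := by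
  have h₁ : HasFDerivAt (fun θ => f (θ, γ a)) _ a :=
    hf.hasFDerivAt.comp a (hasFDerivAt_prodMk_left (𝕜 := 𝕜) a (γ a))
  have h₂ : HasFDerivAt (fun x => f (a, x)) _ (γ a) :=
    hf.hasFDerivAt.comp (γ a) (hasFDerivAt_prodMk_right (𝕜 := 𝕜) a (γ a))
  refine (hf.hasFDerivAt.comp a ((hasFDerivAt_id a).prodMk hγ)).congr_fderiv ?_
  rw [h₁.fderiv, h₂.fderiv]
  ext v
  simp [← map_add]

end PartialDerivatives

theorem hasFDerivAt_log_ratio_comp {E F : Type*} [NormedAddCommGroup E] [NormedSpace ℝ E]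
    [NormedAddCommGroup F] [NormedSpace ℝ F] {q : E × F → ℝ} {p : F → ℝ} {γ : E → F}
    {γ' : E →L[ℝ] F} {a : E} (hq : DifferentiableAt ℝ q (a, γ a)) (hq_ne : q (a, γ a) ≠ 0)
    (hp : DifferentiableAt ℝ p (γ a)) (hp_ne : p (γ a) ≠ 0) (hγ : HasFDerivAt γ γ' a) :
    HasFDerivAt (fun θ => Real.log (q (θ, γ θ)) - Real.log (p (γ θ)))
      (fderiv ℝ (fun θ => Real.log (q (θ, γ a))) a
        + (fderiv ℝ (fun x => Real.log (q (a, x))) (γ a)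
            - fderiv ℝ (fun x => Real.log (p x)) (γ a)).comp γ') a := by
  have := ((hq.log hq_ne).hasFDerivAt_comp_prodMk hγ).sub
    ((hp.log hp_ne).hasFDerivAt.comp a hγ)
  rwa [ContinuousLinearMap.sub_comp, ← add_sub_assoc]

theorem pathwise_KL_gradient_with_parameter_score_general
    {m n d : ℕ}
    (μ : Measure (EuclideanSpace ℝ (Fin n))) [IsProbabilityMeasure μ]
    (U : Set (EuclideanSpace ℝ (Fin m)))
    (θ₀ : EuclideanSpace ℝ (Fin m))
    (g : EuclideanSpace ℝ (Fin m) → EuclideanSpace ℝ (Fin n) → EuclideanSpace ℝ (Fin d))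
    (g' : EuclideanSpace ℝ (Fin m) → EuclideanSpace ℝ (Fin n) →
      (EuclideanSpace ℝ (Fin m) →L[ℝ] EuclideanSpace ℝ (Fin d)))
    (hg_meas : ∀ θ ∈ U, Measurable (g θ))
    (hg_diff : ∀ᵐ z ∂μ, ∀ θ ∈ U, HasFDerivAt (fun θ' => g θ' z) (g' θ z) θ)
    (q : EuclideanSpace ℝ (Fin m) → EuclideanSpace ℝ (Fin d) → ℝ)
    (hq_pos : ∀ θ x, 0 < q θ x)
    (hq_C1 : ContDiff ℝ 1 (fun pr : EuclideanSpace ℝ (Fin m) × EuclideanSpace ℝ (Fin d) =>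
      q pr.1 pr.2))
    (hq_prob : ∀ θ ∈ U, ∫ x, q θ x = 1)
    -- `q θ` is a density of the pushforward of `μ` under `g θ`
    (hq_pushforward : ∀ θ ∈ U, ∀ h : EuclideanSpace ℝ (Fin d) → ℝ, Measurable h →
      (∃ C, ∀ x, |h x| ≤ C) → ∫ z, h (g θ z) ∂μ = ∫ x, h x * q θ x)
    (p : EuclideanSpace ℝ (Fin d) → ℝ)
    (hp_pos : ∀ x, 0 < p x)
    (hp_C1 : ContDiff ℝ 1 p)
    -- KL(q θ ‖ p) is finite for θ in a neighborhood of θ₀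
    (hKL_fin : ∃ V ∈ nhds θ₀, ∀ θ ∈ V,
      Integrable (fun x => q θ x * Real.log (q θ x / p x)))
    -- dominated θ-derivatives of the pathwise integrands, uniformly near θ₀
    (h_dom : ∃ V ∈ nhds θ₀, V ⊆ U ∧ ∃ B : EuclideanSpace ℝ (Fin n) → ℝ,
      Integrable B μ ∧ ∀ θ ∈ V, ∀ᵐ z ∂μ,
        ‖fderiv ℝ (fun θ' => Real.log (q θ' (g θ' z)) - Real.log (p (g θ' z))) θ‖ ≤ B z) :
    HasFDerivAt (fun θ => ∫ x, q θ x * Real.log (q θ x / p x))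
      (∫ z,
        (fderiv ℝ (fun θ => Real.log (q θ (g θ₀ z))) θ₀
          + (fderiv ℝ (fun x => Real.log (q θ₀ x)) (g θ₀ z)
              - fderiv ℝ (fun x => Real.log (p x)) (g θ₀ z)).comp (g' θ₀ z)) ∂μ)
      θ₀ := by
  obtain ⟨V₁, hV₁, hKL_int⟩ := hKL_fin
  obtain ⟨V₂, hV₂, hV₂U, B, hB_int, hB⟩ := h_dom
  obtain ⟨r, hr, hball⟩ := Metric.mem_nhds_iff.1 (inter_mem hV₁ hV₂)
  have hsU : Metric.ball θ₀ r ⊆ U := fun θ hθ => hV₂U (hball hθ).2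
  have hq_cont : ∀ θ, Continuous (q θ) := fun θ => hq_C1.continuous.comp (.prodMk_right θ)
  have hF_meas : ∀ θ ∈ U, Measurable fun z => Real.log (q θ (g θ z)) - Real.log (p (g θ z)) :=
    fun θ hθ => (((hq_cont θ).measurable.comp (hg_meas θ hθ)).log).sub
      ((hp_C1.continuous.measurable.comp (hg_meas θ hθ)).log)
  have hF_deriv := hg_diff.mono fun z hz θ (hθ : θ ∈ U) => hasFDerivAt_log_ratio_comp
    (hq_C1.differentiable one_ne_zero _) (hq_pos _ _).ne'
    (hp_C1.differentiable one_ne_zero _) (hp_pos _).ne' (hz θ hθ)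
  have hKL_eq : ∀ θ ∈ Metric.ball θ₀ r, _ := fun θ hθ =>
    integrable_log_ratio_comp_and_integral_eq (hg_meas θ (hsU hθ)) (hq_cont θ).measurable
      hp_C1.continuous.measurable (hq_pos θ) (fun x => (hp_pos x).ne')
      (.of_integral_ne_zero (by simp [hq_prob θ (hsU hθ)])) (hq_pushforward θ (hsU hθ))
      (hKL_int θ (hball hθ).1)
  have hF_meas_nhds := eventually_of_mem (Metric.ball_mem_nhds θ₀ hr) fun θ hθ =>
    (hF_meas θ (hsU hθ)).aestronglyMeasurable (μ := μ)
  have hA := hF_deriv.mono fun z hz => hz θ₀ (hsU (Metric.mem_ball_self hr))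
  have hLip := ae_lipschitzOnWith_of_forall_ae_norm_fderiv_le (convex_ball θ₀ r)
    (fun θ hθ => (hF_meas θ (hsU hθ)).stronglyMeasurable)
    (hF_deriv.mono fun z hz θ hθ => (hz θ (hsU hθ)).differentiableAt) hB_int.aemeasurable
    fun θ hθ => hB θ (hball hθ).2
  obtain ⟨-, hderiv⟩ := hasFDerivAt_integral_of_dominated_loc_of_lip
    (Metric.ball_mem_nhds θ₀ hr) hF_meas_nhds (hKL_eq θ₀ (Metric.mem_ball_self hr)).1
    (aestronglyMeasurable_of_hasFDerivAt_param hF_meas_nhds hA) hLip hB_int hA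
  exact hderiv.congr_of_eventuallyEq (eventually_of_mem (Metric.ball_mem_nhds θ₀ hr)
    fun θ hθ => (hKL_eq θ hθ).2.symm)

/-- **Pathwise KL-gradient identity (with parameter-score term).**
If `q θ` is a jointly `C¹` family of strictly positive probability densities on `ℝ^d`,
where `q θ` is a density of the pushforward of `μ` under the generator `g θ`, and `p` is a
strictly positive `C¹` probability density, then under finiteness of KL near `θ₀` and
uniform integrable domination of the `θ`-derivatives of the pathwise integrands,
`θ ↦ KL(q θ ‖ p)` is differentiable at `θ₀` with gradient
`∫ [∇_θ log q(θ, x)|_{θ₀, x=g(θ₀,z)} + (∇_x log q θ₀ − ∇_x log p)(g(θ₀,z))ᵀ ∘ ∇_θ g(θ₀,z)] dμ(z)`. -/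
theorem pathwise_KL_gradient_with_parameter_score
    {m n d : ℕ}
    (μ : Measure (EuclideanSpace ℝ (Fin n))) [IsProbabilityMeasure μ]
    (U : Set (EuclideanSpace ℝ (Fin m))) (hU : IsOpen U)
    (θ₀ : EuclideanSpace ℝ (Fin m)) (hθ₀ : θ₀ ∈ U)
    (g : EuclideanSpace ℝ (Fin m) → EuclideanSpace ℝ (Fin n) → EuclideanSpace ℝ (Fin d))
    (g' : EuclideanSpace ℝ (Fin m) → EuclideanSpace ℝ (Fin n) →
      (EuclideanSpace ℝ (Fin m) →L[ℝ] EuclideanSpace ℝ (Fin d)))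
    (hg_meas : ∀ θ ∈ U, Measurable (g θ))
    (hg_diff : ∀ᵐ z ∂μ, ∀ θ ∈ U, HasFDerivAt (fun θ' => g θ' z) (g' θ z) θ)
    (q : EuclideanSpace ℝ (Fin m) → EuclideanSpace ℝ (Fin d) → ℝ)
    (hq_pos : ∀ θ x, 0 < q θ x)
    (hq_C1 : ContDiff ℝ 1 (fun pr : EuclideanSpace ℝ (Fin m) × EuclideanSpace ℝ (Fin d) =>
      q pr.1 pr.2))
    (hq_prob : ∀ θ ∈ U, ∫ x, q θ x = 1)
    -- `q θ` is a density of the pushforward of `μ` under `g θ`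
    (hq_pushforward : ∀ θ ∈ U, ∀ h : EuclideanSpace ℝ (Fin d) → ℝ, Measurable h →
      (∃ C, ∀ x, |h x| ≤ C) → ∫ z, h (g θ z) ∂μ = ∫ x, h x * q θ x)
    (p : EuclideanSpace ℝ (Fin d) → ℝ)
    (hp_pos : ∀ x, 0 < p x)
    (hp_C1 : ContDiff ℝ 1 p)
    (hp_prob : ∫ x, p x = 1)
    -- KL(q θ ‖ p) is finite for θ in a neighborhood of θ₀
    (hKL_fin : ∃ V ∈ nhds θ₀, ∀ θ ∈ V,
      Integrable (fun x => q θ x * Real.log (q θ x / p x)))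
    -- dominated θ-derivatives of the pathwise integrands, uniformly near θ₀
    (h_dom : ∃ V ∈ nhds θ₀, V ⊆ U ∧ ∃ B : EuclideanSpace ℝ (Fin n) → ℝ,
      Integrable B μ ∧ ∀ θ ∈ V, ∀ᵐ z ∂μ,
        ‖fderiv ℝ (fun θ' => Real.log (q θ' (g θ' z)) - Real.log (p (g θ' z))) θ‖ ≤ B z) :
    HasFDerivAt (fun θ => ∫ x, q θ x * Real.log (q θ x / p x))
      (∫ z,
        (fderiv ℝ (fun θ => Real.log (q θ (g θ₀ z))) θ₀
          + (fderiv ℝ (fun x => Real.log (q θ₀ x)) (g θ₀ z)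
              - fderiv ℝ (fun x => Real.log (p x)) (g θ₀ z)).comp (g' θ₀ z)) ∂μ)
      θ₀ :=
  pathwise_KL_gradient_with_parameter_score_general μ U θ₀ g g' hg_meas hg_diff q hq_pos hq_C1
    hq_prob hq_pushforward p hp_pos hp_C1 hKL_fin h_dom
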